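/- The number of permutations of [n] avoiding all of 231, 312, and 321 is the Fibonacci number F_{n+1}, where F_0 = 0 and F_1 = 1. -/

import Mathlib

/-- An occurrence of the pattern `σ` in `π` is a strictly increasing choice of
indices whose images under `π` are order-isomorphic to `σ`. -/
def IsOccurrence {m n : ℕ} (σ : Equiv.Perm (Fin m)) (π : Equiv.Perm (Fin n))
    (f : Fin m → Fin n) : Prop :=
  StrictMono f ∧ ∀ j k : Fin m, π (f j) < π (f k) ↔ σ j < σ k

/-- `numOcc σ π` is the number of occurrences of the pattern `σ` in `π`. -/
noncomputable def numOcc {m n : ℕ} (σ : Equiv.Perm (Fin m)) (π : Equiv.Perm (Fin n)) : ℕ :=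
  Nat.card {f : Fin m → Fin n // IsOccurrence σ π f}

def p123 : Equiv.Perm (Fin 3) := 1
def p132 : Equiv.Perm (Fin 3) := Equiv.swap 1 2
def p213 : Equiv.Perm (Fin 3) := Equiv.swap 0 1
def p321 : Equiv.Perm (Fin 3) := Equiv.swap 0 2
def p231 : Equiv.Perm (Fin 3) := finRotate 3
def p312 : Equiv.Perm (Fin 3) := (finRotate 3)⁻¹

/-!
A pattern of length three whose first entry exceeds its last is exactly one of `231`, `312`,
`321`, so a permutation avoids all three iff each of its inversions involves two adjacent
positions. Such a permutation of `[n + 2]` is either `1 ⊕ π` or `21 ⊕ π` for such a permutation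
`π` of `[n + 1]` resp. `[n]`, which gives the Fibonacci recursion.
-/

open Equiv

theorem isOccurrence_iff {m n : ℕ} {σ : Perm (Fin m)} {π : Perm (Fin n)} {f : Fin m → Fin n} :
    IsOccurrence σ π f ↔ StrictMono f ∧ StrictMono (π ∘ f ∘ σ.symm) := by
  refine and_congr_right fun _ => ⟨fun h x y hxy => ?_, fun h j k => ?_⟩
  · simpa [h] using hxy
  · simpa using h.lt_iff_lt (a := σ j) (b := σ k)

theorem numOcc_eq_zero_iff {m n : ℕ} {σ : Perm (Fin m)} {π : Perm (Fin n)} :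
    numOcc σ π = 0 ↔ ∀ f, ¬ IsOccurrence σ π f := by
  rw [numOcc, Finite.card_eq_zero_iff, isEmpty_subtype]

section ThreePatterns

variable {n : ℕ} {π : Perm (Fin n)} {a b c : Fin n}

theorem isOccurrence_p231 (hab : a < b) (hbc : b < c) (hca : π c < π a) (hab' : π a < π b) :
    IsOccurrence p231 π ![a, b, c] := by
  have : π ∘ ![a, b, c] ∘ p231.symm = ![π c, π a, π b] := by funext i; fin_cases i <;> rfl
  simp_all [isOccurrence_iff]

theorem isOccurrence_p312 (hab : a < b) (hbc : b < c) (hbc' : π b < π c) (hca : π c < π a) :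
    IsOccurrence p312 π ![a, b, c] := by
  have : π ∘ ![a, b, c] ∘ p312.symm = ![π b, π c, π a] := by funext i; fin_cases i <;> rfl
  simp_all [isOccurrence_iff]

theorem isOccurrence_p321 (hab : a < b) (hbc : b < c) (hcb : π c < π b) (hba : π b < π a) :
    IsOccurrence p321 π ![a, b, c] := by
  have : π ∘ ![a, b, c] ∘ p321.symm = ![π c, π b, π a] := by funext i; fin_cases i <;> rfl
  simp_all [isOccurrence_iff]

end ThreePatterns

namespace Equiv.Perm

variable {n : ℕ}

def InversionsAdjacent (π : Perm (Fin n)) : Prop :=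
  ∀ ⦃i j : Fin n⦄, i < j → π j < π i → (j : ℕ) = i + 1

theorem not_isOccurrence_of_inversionsAdjacent {π : Perm (Fin n)} (hπ : π.InversionsAdjacent)
    {σ : Perm (Fin 3)} (hσ : σ 2 < σ 0) (f : Fin 3 → Fin n) : ¬ IsOccurrence σ π f := by
  rintro ⟨hf, hfσ⟩
  have h01 : f 0 < f 1 := hf (by decide)
  have h12 : f 1 < f 2 := hf (by decide)
  have := hπ (h01.trans h12) ((hfσ 2 0).2 hσ)
  omega

theorem inversionsAdjacent_iff_avoids_231_312_321 (π : Perm (Fin n)) :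
    π.InversionsAdjacent ↔ numOcc p231 π = 0 ∧ numOcc p312 π = 0 ∧ numOcc p321 π = 0 := by
  simp only [numOcc_eq_zero_iff]
  refine ⟨fun hπ => ?_, fun ⟨h231, h312, h321⟩ i j hij hji => ?_⟩
  · exact ⟨not_isOccurrence_of_inversionsAdjacent hπ (by decide),
      not_isOccurrence_of_inversionsAdjacent hπ (by decide),
      not_isOccurrence_of_inversionsAdjacent hπ (by decide)⟩
  by_contra hne
  let k : Fin n := ⟨i + 1, by omega⟩
  have hik : i < k := Fin.lt_def.2 (Nat.lt_succ_self i)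
  have hkj : k < j := Fin.lt_def.2 (show (i : ℕ) + 1 < j by omega)
  rcases lt_trichotomy (π k) (π j) with hkj' | hkj' | hkj'
  · exact h312 _ (isOccurrence_p312 hik hkj hkj' hji)
  · exact hkj.ne (π.injective hkj')
  rcases lt_trichotomy (π k) (π i) with hki | hki | hki
  · exact h321 _ (isOccurrence_p321 hik hkj hkj' hki)
  · exact hik.ne' (π.injective hki)
  · exact h231 _ (isOccurrence_p231 hik hkj hji hki)

def prependFixed (π : Perm (Fin n)) : Perm (Fin (n + 1)) :=
  decomposeFin.symm (0, π)

def prependSwap (π : Perm (Fin n)) : Perm (Fin (n + 2)) :=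
  swap 0 1 * prependFixed (prependFixed π)

@[simp]
theorem prependFixed_zero (π : Perm (Fin n)) : prependFixed π 0 = 0 :=
  decomposeFin_symm_apply_zero 0 π

@[simp]
theorem prependFixed_succ (π : Perm (Fin n)) (i : Fin n) :
    prependFixed π i.succ = (π i).succ := by
  rw [prependFixed, decomposeFin_symm_apply_succ, swap_self, refl_apply]

theorem prependFixed_injective : Function.Injective (prependFixed (n := n)) := fun _ _ h =>
  (Prod.mk.inj (decomposeFin.symm.injective h)).2

theorem exists_prependFixed_eq {τ : Perm (Fin (n + 1))} (h : τ 0 = 0) :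
    ∃ π, prependFixed π = τ := by
  refine ⟨(decomposeFin τ).2, ?_⟩
  have hfst : (decomposeFin τ).1 = 0 := by
    rw [← h, ← decomposeFin_symm_apply_zero (decomposeFin τ).1 (decomposeFin τ).2]
    simp
  rw [prependFixed, ← hfst, decomposeFin.symm_apply_apply]

@[simp]
theorem prependSwap_zero (π : Perm (Fin n)) : prependSwap π 0 = 1 := by
  simp [prependSwap]

@[simp]
theorem prependSwap_one (π : Perm (Fin n)) : prependSwap π 1 = 0 := by
  rw [prependSwap, Perm.mul_apply, ← Fin.succ_zero_eq_one, prependFixed_succ, prependFixed_zero]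
  simp

@[simp]
theorem prependSwap_succ_succ (π : Perm (Fin n)) (i : Fin n) :
    prependSwap π i.succ.succ = (π i).succ.succ := by
  simp only [prependSwap, Perm.mul_apply, prependFixed_succ]
  exact swap_apply_of_ne_of_ne (Fin.succ_ne_zero _) (Fin.succ_succ_ne_one _)

theorem prependSwap_injective : Function.Injective (prependSwap (n := n)) := fun _ _ h =>
  prependFixed_injective (prependFixed_injective (mul_right_injective _ h))

theorem inversionsAdjacent_prependFixed_iff {π : Perm (Fin n)} :
    (prependFixed π).InversionsAdjacent ↔ π.InversionsAdjacent := by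
  simp [InversionsAdjacent, Fin.forall_fin_succ]

theorem inversionsAdjacent_prependSwap_iff {π : Perm (Fin n)} :
    (prependSwap π).InversionsAdjacent ↔ π.InversionsAdjacent := by
  simp [InversionsAdjacent, Fin.forall_fin_succ]

theorem InversionsAdjacent.eq_one_of_apply_lt_apply_zero {τ : Perm (Fin (n + 2))}
    (hτ : τ.InversionsAdjacent) {j : Fin (n + 2)} (hj : τ j < τ 0) : j = 1 := by
  have hj0 : 0 < j := Fin.pos_of_ne_zero fun h => (h ▸ hj).false
  exact Fin.ext (hτ hj0 hj)

theorem InversionsAdjacent.apply_zero_cases {τ : Perm (Fin (n + 2))}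
    (hτ : τ.InversionsAdjacent) : τ 0 = 0 ∨ τ 0 = 1 ∧ τ 1 = 0 := by
  refine or_iff_not_imp_left.2 fun h0 => ?_
  have h1 : τ 1 = 0 := by
    rw [← hτ.eq_one_of_apply_lt_apply_zero (j := τ.symm 0) (by simpa [Fin.pos_iff_ne_zero]),
      apply_symm_apply]
  refine ⟨?_, h1⟩
  by_contra hne
  have h0' : (τ 0 : ℕ) ≠ 0 := fun h => h0 (Fin.ext (by simpa using h))
  have h1' : (τ 0 : ℕ) ≠ 1 := fun h => hne (Fin.ext (by simpa using h))
  have : τ.symm 1 = 1 :=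
    hτ.eq_one_of_apply_lt_apply_zero (by rw [apply_symm_apply, Fin.lt_def]; simp; omega)
  exact zero_ne_one (h1.symm.trans (τ.symm_apply_eq.1 this).symm)

theorem exists_prependSwap_eq {τ : Perm (Fin (n + 2))} (h0 : τ 0 = 1) (h1 : τ 1 = 0) :
    ∃ π, prependSwap π = τ := by
  obtain ⟨σ, hσ⟩ := exists_prependFixed_eq (τ := swap 0 1 * τ) (by simp [h0])
  have hσ0 : σ 0 = 0 := by
    have := DFunLike.congr_fun hσ 1
    rw [← Fin.succ_zero_eq_one, prependFixed_succ, Perm.mul_apply, Fin.succ_zero_eq_one, h1,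
      swap_apply_left, ← Fin.succ_zero_eq_one] at this
    exact Fin.succ_injective _ this
  obtain ⟨π, rfl⟩ := exists_prependFixed_eq hσ0
  exact ⟨π, by rw [prependSwap, hσ, swap_mul_self_mul]⟩

theorem InversionsAdjacent.of_le_two {π : Perm (Fin n)} (hn : n ≤ 2) : π.InversionsAdjacent :=
  fun i j hij _ => by omega

noncomputable def inversionsAdjacentSumEquiv (n : ℕ) :
    {π : Perm (Fin (n + 1)) // π.InversionsAdjacent} ⊕ {π : Perm (Fin n) // π.InversionsAdjacent} ≃
      {τ : Perm (Fin (n + 2)) // τ.InversionsAdjacent} :=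
  Equiv.ofBijective
    (Sum.elim (fun π => ⟨prependFixed π, inversionsAdjacent_prependFixed_iff.2 π.2⟩)
      (fun π => ⟨prependSwap π, inversionsAdjacent_prependSwap_iff.2 π.2⟩))
    ⟨by
      refine Function.Injective.sumElim (fun π π' h => ?_) (fun π π' h => ?_) fun π π' h => ?_
      · exact Subtype.ext (prependFixed_injective (congrArg Subtype.val h))
      · exact Subtype.ext (prependSwap_injective (congrArg Subtype.val h))
      · simpa using DFunLike.congr_fun (congrArg Subtype.val h) 0,
    by
      rintro ⟨τ, hτ⟩
      rcases hτ.apply_zero_cases with h0 | ⟨h0, h1⟩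
      · obtain ⟨π, rfl⟩ := exists_prependFixed_eq h0
        exact ⟨.inl ⟨π, inversionsAdjacent_prependFixed_iff.1 hτ⟩, rfl⟩
      · obtain ⟨π, rfl⟩ := exists_prependSwap_eq h0 h1
        exact ⟨.inr ⟨π, inversionsAdjacent_prependSwap_iff.1 hτ⟩, rfl⟩⟩

theorem card_inversionsAdjacent : ∀ n : ℕ,
    Nat.card {π : Perm (Fin n) // π.InversionsAdjacent} = Nat.fib (n + 1)
  | 0 | 1 => by
    rw [Nat.card_congr (Equiv.subtypeUnivEquiv fun _ => InversionsAdjacent.of_le_two (by omega)),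
      Nat.card_perm, Nat.card_fin]
    rfl
  | n + 2 => by
    rw [← Nat.card_congr (inversionsAdjacentSumEquiv n), Nat.card_sum,
      card_inversionsAdjacent (n + 1), card_inversionsAdjacent n]
    exact (add_comm _ _).trans Nat.fib_add_two.symm

end Equiv.Perm

theorem card_avoid_231_312_321 (n : ℕ) :
    Nat.card {π : Equiv.Perm (Fin n) //
        numOcc p231 π = 0 ∧ numOcc p312 π = 0 ∧ numOcc p321 π = 0} =
      Nat.fib (n + 1) := by
  rw [← Nat.card_congr (subtypeEquivRight Perm.inversionsAdjacent_iff_avoids_231_312_321),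
    Perm.card_inversionsAdjacent]
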